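/- The uniform initial state ψ_{kl} = 1/N for all k,l ∈ S is constant on products of clusters: ψ_{k₁l₁} = ψ_{k₂l₂} whenever k₁~k₂ and l₁~l₂; consequently, by induction, any finite sequence of alternating applications of the dueling updates 𝒢₁ and 𝒢₂ preserves this cluster-uniformity property. -/

import Mathlib

def duelRel {S : Type*} (v : S → ℝ) (f : S → Bool) (x y : S) : Prop :=
  (f x = true ∧ f y = true ∧ v x = v y) ∨
  (f x = false ∧ f y = false ∧
    ∀ z : S, f z = true → ¬ (min (v x) (v y) ≤ v z ∧ v z < max (v x) (v y)))

noncomputable def duelO {S : Type*} (v : S → ℝ) (f : S → Bool) (x y : S) : ℂ :=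
  if f x = true ∧ v x < v y then -1 else 1

/-- The dueling update on the first register. -/
noncomputable def G1 {S : Type*} [Fintype S] (v : S → ℝ) (f : S → Bool)
    (ψ : S × S → ℂ) : S × S → ℂ := fun kl =>
  (2 / (Fintype.card S : ℂ)) * ∑ k' : S, duelO v f k' kl.2 * ψ (k', kl.2) -
    duelO v f kl.1 kl.2 * ψ kl

/-- The dueling update on the second register. -/
noncomputable def G2 {S : Type*} [Fintype S] (v : S → ℝ) (f : S → Bool)
    (ψ : S × S → ℂ) : S × S → ℂ := fun kl =>
  (2 / (Fintype.card S : ℂ)) * ∑ l' : S, duelO v f l' kl.1 * ψ (kl.1, l') -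
    duelO v f kl.2 kl.1 * ψ kl

/-- `ψ` is constant on products of clusters. -/
def ClusterUniform {S : Type*} (v : S → ℝ) (f : S → Bool) (ψ : S × S → ℂ) : Prop :=
  ∀ k₁ k₂ l₁ l₂ : S, duelRel v f k₁ k₂ → duelRel v f l₁ l₂ →
    ψ (k₁, l₁) = ψ (k₂, l₂)

/- `duelO k l` depends only on the clusters of `k` and `l`: a marked cluster has a single value,
and no marked value lies between two members of an unmarked cluster, so a marked `k` compares
the same way with both. Both updates are built from `duelO`, `ψ` and sums over a whole
register, so they map cluster-uniform states to cluster-uniform states. -/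

section Dueling

variable {S : Type*} {v : S → ℝ} {f : S → Bool}

theorem duelRel_refl (x : S) : duelRel v f x x := by
  cases h : f x
  · refine Or.inr ⟨h, h, fun z _ hz => ?_⟩
    rw [min_self, max_self] at hz
    exact hz.1.not_gt hz.2
  · exact Or.inl ⟨h, h, rfl⟩

theorem duelRel.lt_iff_lt {x l₁ l₂ : S} (hx : f x = true) (hl : duelRel v f l₁ l₂) :
    v x < v l₁ ↔ v x < v l₂ := by
  rcases hl with ⟨-, -, hv⟩ | ⟨-, -, hgap⟩
  · rw [hv]
  · have := hgap x hx
    rw [min_le_iff, lt_max_iff] at this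
    constructor <;> intro h <;> by_contra h' <;> rw [not_lt] at h' <;> tauto

theorem duelO_congr {k₁ k₂ l₁ l₂ : S} (hk : duelRel v f k₁ k₂) (hl : duelRel v f l₁ l₂) :
    duelO v f k₁ l₁ = duelO v f k₂ l₂ := by
  rcases hk with ⟨hk₁, hk₂, hv⟩ | ⟨hk₁, hk₂, -⟩
  · simp only [duelO, hk₁, hk₂, true_and, ← hv, duelRel.lt_iff_lt hk₁ hl]
  · simp [duelO, hk₁, hk₂]

theorem clusterUniform_const (c : ℂ) : ClusterUniform v f (fun _ => c) :=
  fun _ _ _ _ _ _ => rfl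

variable [Fintype S] {ψ : S × S → ℂ}

theorem ClusterUniform.G1 (hψ : ClusterUniform v f ψ) : ClusterUniform v f (G1 v f ψ) := by
  intro k₁ k₂ l₁ l₂ hk hl
  have hsum : ∑ k', duelO v f k' l₁ * ψ (k', l₁) = ∑ k', duelO v f k' l₂ * ψ (k', l₂) :=
    Finset.sum_congr rfl fun k' _ => by
      rw [duelO_congr (duelRel_refl k') hl, hψ k' k' l₁ l₂ (duelRel_refl k') hl]
  simp only [_root_.G1, hsum, duelO_congr hk hl, hψ k₁ k₂ l₁ l₂ hk hl]

theorem ClusterUniform.G2 (hψ : ClusterUniform v f ψ) : ClusterUniform v f (G2 v f ψ) := by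
  intro k₁ k₂ l₁ l₂ hk hl
  have hsum : ∑ l', duelO v f l' k₁ * ψ (k₁, l') = ∑ l', duelO v f l' k₂ * ψ (k₂, l') :=
    Finset.sum_congr rfl fun l' _ => by
      rw [duelO_congr (duelRel_refl l') hk, hψ k₁ k₂ l' l' hk (duelRel_refl l')]
  simp only [_root_.G2, hsum, duelO_congr hl hk, hψ k₁ k₂ l₁ l₂ hk hl]

end Dueling

/-- The uniform initial state is cluster-uniform, and any finite sequence of
applications of the dueling updates `𝒢₁`/`𝒢₂` preserves cluster-uniformity. -/
theorem dueling_preserves_cluster_uniformity {S : Type*} [Fintype S]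
    (v : S → ℝ) (f : S → Bool) :
    ClusterUniform v f (fun _ => 1 / (Fintype.card S : ℂ)) ∧
      ∀ ops : List Bool,
        ClusterUniform v f
          (ops.foldr (fun b ψ => if b then G1 v f ψ else G2 v f ψ)
            (fun _ => 1 / (Fintype.card S : ℂ))) := by
  refine ⟨clusterUniform_const _, fun ops => ?_⟩
  induction ops with
  | nil => exact clusterUniform_const _
  | cons b ops ih =>
    cases b
    · exact ih.G2
    · exact ih.G1
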